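/- arXiv:2006.01219 — 6 statements merged into one kernel-verified Lean document; each statement's English description precedes it below -/
import Mathlib

section
/- Let N ⊆ ℝ² be open and σ : N → ℝ be twice continuously differentiable. Let U ⊆ ℂ be open and s, t : U → ℝ be continuously differentiable with (s(ζ), t(ζ)) ∈ N for all ζ ∈ U, and set X(ζ) = σ_s(s(ζ), t(ζ)), Y(ζ) = σ_t(s(ζ), t(ζ)). Suppose at ζ₀ ∈ U: s_ζ(ζ₀) ≠ 0, t_ζ(ζ₀) ≠ 0, the Hessian of σ at (s(ζ₀), t(ζ₀)) satisfies σ_ss > 0 and det H_σ = σ_ss σ_tt − σ_st² > 0, the imaginary part of γ = s_ζ(ζ₀)/t_ζ(ζ₀) is negative, and X_ζ(ζ₀)/t_ζ(ζ₀) + Y_ζ(ζ₀)/s_ζ(ζ₀) = 0. Then γ = (−σ_st − i√(det H_σ))/σ_ss, and moreover X_ζ(ζ₀) = −i√(det H_σ) · t_ζ(ζ₀) and Y_ζ(ζ₀) = i√(det H_σ) · s_ζ(ζ₀). -/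
/-- The Wirtinger derivative `f_z = ½(∂f/∂u − i ∂f/∂v)` of `f : ℂ → ℂ`,
computed via the real Fréchet derivative in the directions `1` and `i`. -/
noncomputable def wirtingerDeriv (f : ℂ → ℂ) (z : ℂ) : ℂ :=
  (fderiv ℝ f z 1 - Complex.I * fderiv ℝ f z Complex.I) / 2

/-- Partial derivative in the first coordinate of `f : ℝ × ℝ → ℝ`. -/
noncomputable def pd1 (f : ℝ × ℝ → ℝ) (p : ℝ × ℝ) : ℝ := fderiv ℝ f p (1, 0)

/-- Partial derivative in the second coordinate of `f : ℝ × ℝ → ℝ`. -/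
noncomputable def pd2 (f : ℝ × ℝ → ℝ) (p : ℝ × ℝ) : ℝ := fderiv ℝ f p (0, 1)

private lemma wirt_real (f : ℂ → ℝ) {z : ℂ} {L : ℂ →L[ℝ] ℝ} (hf : HasFDerivAt f L z) :
    wirtingerDeriv (fun ζ => (f ζ : ℂ)) z =
      (((L 1 : ℝ) : ℂ) - Complex.I * ((L Complex.I : ℝ) : ℂ)) / 2 := by
  have h : HasFDerivAt (fun ζ => (f ζ : ℂ)) (Complex.ofRealCLM.comp L) z :=
    Complex.ofRealCLM.hasFDerivAt.comp z hf
  simp [wirtingerDeriv, h.fderiv]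

/-- algebraic core -/
private lemma alg_core (a b c D : ℝ) (sz tz γ Xz Yz : ℂ)
    (hsz : sz ≠ 0) (htz : tz ≠ 0) (ha : 0 < a) (hdet : 0 < a*c - b^2)
    (hD : D = Real.sqrt (a*c - b^2))
    (hγ : γ = sz / tz) (him : γ.im < 0)
    (hXz : Xz = (a:ℂ) * sz + (b:ℂ) * tz)
    (hYz : Yz = (b:ℂ) * sz + (c:ℂ) * tz)
    (heq : Xz / tz + Yz / sz = 0) :
    γ = (-(b:ℂ) - Complex.I * (D:ℝ)) / (a:ℂ) ∧
    Xz = -Complex.I * (D:ℝ) * tz ∧ Yz = Complex.I * (D:ℝ) * sz := by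
  have hD2 : ((D:ℂ))^2 = (a:ℂ)*c - (b:ℂ)^2 := by
    rw [hD]
    rw [show ((Real.sqrt (a*c-b^2):ℝ):ℂ)^2 = (((Real.sqrt (a*c-b^2))^2 : ℝ) : ℂ) by push_cast; ring,
      Real.sq_sqrt hdet.le]
    push_cast; ring
  have hDpos : 0 < D := hD ▸ Real.sqrt_pos.mpr hdet
  have haC : (a:ℂ) ≠ 0 := by exact_mod_cast ha.ne'
  have E : (a:ℂ) * sz^2 + 2*b*sz*tz + c*tz^2 = 0 := by
    rw [hXz, hYz] at heq
    field_simp at heq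
    linear_combination heq
  have hsγ : sz = γ * tz := by rw [hγ]; field_simp
  have hfac : ((a:ℂ)*sz + b*tz - Complex.I*D*tz) * ((a:ℂ)*sz + b*tz + Complex.I*D*tz) = 0 := by
    linear_combination (a:ℂ) * E + tz^2 * hD2 - (D:ℂ)^2*tz^2 * Complex.I_sq
  rcases mul_eq_zero.mp hfac with h | h
  · exfalso
    have h2 : (a:ℂ)*γ + b - Complex.I*D = 0 := by
      have : ((a:ℂ)*γ + b - Complex.I*D) * tz = 0 := by
        rw [hsγ] at h; linear_combination h
      exact (mul_eq_zero.mp this).resolve_right htz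
    have := congrArg Complex.im h2
    simp [Complex.add_im, Complex.sub_im, Complex.mul_im] at this
    nlinarith
  · have hX2 : Xz = -Complex.I * (D:ℝ) * tz := by
      rw [hXz]; linear_combination h
    have hγ2 : γ = (-(b:ℂ) - Complex.I * (D:ℝ)) / (a:ℂ) := by
      rw [hsγ] at h
      field_simp
      apply mul_right_cancel₀ htz
      linear_combination h
    have hY2 : Yz = Complex.I * (D:ℝ) * sz := by
      apply mul_right_cancel₀ htz
      rw [hYz]
      linear_combination E - sz * h
    exact ⟨hγ2, hX2, hY2⟩

theorem stmt1 (N : Set (ℝ × ℝ)) (hN : IsOpen N) (σ : ℝ × ℝ → ℝ)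
    (hσ : ContDiffOn ℝ 2 σ N)
    (U : Set ℂ) (hU : IsOpen U) (s t : ℂ → ℝ)
    (hs : ContDiffOn ℝ 1 s U) (ht : ContDiffOn ℝ 1 t U)
    (hmem : ∀ ζ ∈ U, (s ζ, t ζ) ∈ N)
    (X Y : ℂ → ℝ)
    (hX : ∀ ζ, X ζ = pd1 σ (s ζ, t ζ)) (hY : ∀ ζ, Y ζ = pd2 σ (s ζ, t ζ))
    (ζ₀ : ℂ) (hζ₀ : ζ₀ ∈ U)
    (hsz : wirtingerDeriv (fun ζ => (s ζ : ℂ)) ζ₀ ≠ 0)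
    (htz : wirtingerDeriv (fun ζ => (t ζ : ℂ)) ζ₀ ≠ 0)
    (hss : 0 < pd1 (pd1 σ) (s ζ₀, t ζ₀))
    (hdet : 0 < pd1 (pd1 σ) (s ζ₀, t ζ₀) * pd2 (pd2 σ) (s ζ₀, t ζ₀) -
      pd2 (pd1 σ) (s ζ₀, t ζ₀) ^ 2)
    (γ : ℂ)
    (hγ : γ = wirtingerDeriv (fun ζ => (s ζ : ℂ)) ζ₀ /
      wirtingerDeriv (fun ζ => (t ζ : ℂ)) ζ₀)
    (him : γ.im < 0)
    (heq : wirtingerDeriv (fun ζ => (X ζ : ℂ)) ζ₀ / wirtingerDeriv (fun ζ => (t ζ : ℂ)) ζ₀ +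
      wirtingerDeriv (fun ζ => (Y ζ : ℂ)) ζ₀ / wirtingerDeriv (fun ζ => (s ζ : ℂ)) ζ₀ = 0) :
    γ = (-(pd2 (pd1 σ) (s ζ₀, t ζ₀) : ℂ) - Complex.I *
        (Real.sqrt (pd1 (pd1 σ) (s ζ₀, t ζ₀) * pd2 (pd2 σ) (s ζ₀, t ζ₀) -
          pd2 (pd1 σ) (s ζ₀, t ζ₀) ^ 2) : ℝ)) / (pd1 (pd1 σ) (s ζ₀, t ζ₀) : ℂ) ∧
    wirtingerDeriv (fun ζ => (X ζ : ℂ)) ζ₀ =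
      -Complex.I * (Real.sqrt (pd1 (pd1 σ) (s ζ₀, t ζ₀) * pd2 (pd2 σ) (s ζ₀, t ζ₀) -
        pd2 (pd1 σ) (s ζ₀, t ζ₀) ^ 2) : ℝ) * wirtingerDeriv (fun ζ => (t ζ : ℂ)) ζ₀ ∧
    wirtingerDeriv (fun ζ => (Y ζ : ℂ)) ζ₀ =
      Complex.I * (Real.sqrt (pd1 (pd1 σ) (s ζ₀, t ζ₀) * pd2 (pd2 σ) (s ζ₀, t ζ₀) -
        pd2 (pd1 σ) (s ζ₀, t ζ₀) ^ 2) : ℝ) * wirtingerDeriv (fun ζ => (s ζ : ℂ)) ζ₀ := by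
  have hp₀ : (s ζ₀, t ζ₀) ∈ N := hmem ζ₀ hζ₀
  have hσ2 : ContDiffAt ℝ 2 σ (s ζ₀, t ζ₀) := hσ.contDiffAt (hN.mem_nhds hp₀)
  have hsd : DifferentiableAt ℝ s ζ₀ :=
    (hs.contDiffAt (hU.mem_nhds hζ₀)).differentiableAt one_ne_zero
  have htd : DifferentiableAt ℝ t ζ₀ :=
    (ht.contDiffAt (hU.mem_nhds hζ₀)).differentiableAt one_ne_zero
  set Ls := fderiv ℝ s ζ₀ with hLs
  set Lt := fderiv ℝ t ζ₀ with hLt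
  have hg : HasFDerivAt (fun ζ => (s ζ, t ζ)) (Ls.prod Lt) ζ₀ :=
    HasFDerivAt.prodMk hsd.hasFDerivAt htd.hasFDerivAt
  have hσf : ContDiffAt ℝ 1 (fderiv ℝ σ) (s ζ₀, t ζ₀) := hσ2.fderiv_right (by norm_num)
  set B := fderiv ℝ (fderiv ℝ σ) (s ζ₀, t ζ₀) with hB
  have hBd : HasFDerivAt (fderiv ℝ σ) B (s ζ₀, t ζ₀) :=
    (hσf.differentiableAt one_ne_zero).hasFDerivAt
  -- derivatives of pd1 σ and pd2 σ
  have h1 : HasFDerivAt (pd1 σ)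
      ((ContinuousLinearMap.apply ℝ ℝ ((1:ℝ),(0:ℝ))).comp B) (s ζ₀, t ζ₀) :=
    (ContinuousLinearMap.apply ℝ ℝ ((1:ℝ),(0:ℝ))).hasFDerivAt.comp _ hBd
  have h2 : HasFDerivAt (pd2 σ)
      ((ContinuousLinearMap.apply ℝ ℝ ((0:ℝ),(1:ℝ))).comp B) (s ζ₀, t ζ₀) :=
    (ContinuousLinearMap.apply ℝ ℝ ((0:ℝ),(1:ℝ))).hasFDerivAt.comp _ hBd
  have hXd : HasFDerivAt X
      (((ContinuousLinearMap.apply ℝ ℝ ((1:ℝ),(0:ℝ))).comp B).comp (Ls.prod Lt)) ζ₀ := by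
    have hXfun : X = fun ζ => pd1 σ (s ζ, t ζ) := funext hX
    rw [hXfun]; exact h1.comp ζ₀ hg
  have hYd : HasFDerivAt Y
      (((ContinuousLinearMap.apply ℝ ℝ ((0:ℝ),(1:ℝ))).comp B).comp (Ls.prod Lt)) ζ₀ := by
    have hYfun : Y = fun ζ => pd2 σ (s ζ, t ζ) := funext hY
    rw [hYfun]; exact h2.comp ζ₀ hg
  -- identify second partials with B
  have ha : pd1 (pd1 σ) (s ζ₀, t ζ₀) = B (1,0) (1,0) := by rw [pd1, h1.fderiv]; rfl
  have hb : pd2 (pd1 σ) (s ζ₀, t ζ₀) = B (0,1) (1,0) := by rw [pd2, h1.fderiv]; rfl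
  have hb' : pd1 (pd2 σ) (s ζ₀, t ζ₀) = B (1,0) (0,1) := by rw [pd1, h2.fderiv]; rfl
  have hc : pd2 (pd2 σ) (s ζ₀, t ζ₀) = B (0,1) (0,1) := by rw [pd2, h2.fderiv]; rfl
  have hsymm : B (1,0) (0,1) = B (0,1) (1,0) :=
    hσ2.isSymmSndFDerivAt (by norm_num) _ _
  have hbb : pd1 (pd2 σ) (s ζ₀, t ζ₀) = pd2 (pd1 σ) (s ζ₀, t ζ₀) := by
    rw [hb', hb, hsymm]
  -- generic computation of composed derivative applied to vectors
  have key : ∀ (w : ℝ × ℝ) (v : ℂ),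
      ((((ContinuousLinearMap.apply ℝ ℝ w).comp B).comp (Ls.prod Lt)) v : ℝ)
      = B (1,0) w * Ls v + B (0,1) w * Lt v := by
    intro w v
    have hv : ((Ls v, Lt v) : ℝ×ℝ) = Ls v • ((1:ℝ),(0:ℝ)) + Lt v • ((0:ℝ),(1:ℝ)) := by simp
    simp only [ContinuousLinearMap.comp_apply, ContinuousLinearMap.prod_apply,
      ContinuousLinearMap.apply_apply, hv, map_add, map_smul]
    simp [mul_comm]
  -- Wirtinger derivatives
  set sz := wirtingerDeriv (fun ζ => (s ζ : ℂ)) ζ₀ with hszdef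
  set tz := wirtingerDeriv (fun ζ => (t ζ : ℂ)) ζ₀ with htzdef
  have hszf : sz = (((Ls 1 : ℝ) : ℂ) - Complex.I * ((Ls Complex.I : ℝ) : ℂ)) / 2 :=
    wirt_real s hsd.hasFDerivAt
  have htzf : tz = (((Lt 1 : ℝ) : ℂ) - Complex.I * ((Lt Complex.I : ℝ) : ℂ)) / 2 :=
    wirt_real t htd.hasFDerivAt
  have hXz : wirtingerDeriv (fun ζ => (X ζ : ℂ)) ζ₀ =
      (pd1 (pd1 σ) (s ζ₀, t ζ₀) : ℂ) * sz + (pd2 (pd1 σ) (s ζ₀, t ζ₀) : ℂ) * tz := by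
    rw [wirt_real X hXd, key, key, ha, hb, hszf, htzf]
    push_cast; ring
  have hYz : wirtingerDeriv (fun ζ => (Y ζ : ℂ)) ζ₀ =
      (pd2 (pd1 σ) (s ζ₀, t ζ₀) : ℂ) * sz + (pd2 (pd2 σ) (s ζ₀, t ζ₀) : ℂ) * tz := by
    rw [wirt_real Y hYd, key, key, ← hbb, hb', hc, hszf, htzf]
    push_cast; ring
  exact alg_core (pd1 (pd1 σ) (s ζ₀, t ζ₀)) (pd2 (pd1 σ) (s ζ₀, t ζ₀))
    (pd2 (pd2 σ) (s ζ₀, t ζ₀)) _ sz tz γ _ _ hsz htz hss hdet rfl hγ him hXz hYz heq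
end

section
/- (Ampère's intrinsic Euler–Lagrange equation.) Let U ⊆ ℂ be open, let X, Y, s, t : U → ℝ be continuously differentiable, and let κ : U → ℝ be a function such that X_z = −i κ t_z and Y_z = i κ s_z on U (Wirtinger derivatives). Let Ω ⊆ ℝ² be open and z : Ω → U continuously differentiable, and suppose that on Ω the Euler–Lagrange equation ∂_x(X ∘ z) + ∂_y(Y ∘ z) = 0 and the curl-free condition ∂_x(t ∘ z) = ∂_y(s ∘ z) hold. Then for all (x, y) ∈ Ω: X_z(z(x,y)) · ∂_x z(x,y) + Y_z(z(x,y)) · ∂_y z(x,y) = 0. -/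
/-- For a real-valued `f`, the real differential in direction `h` equals
`f_z · h + conj (f_z · h)` where `f_z` is the Wirtinger derivative of the
complexification of `f`. -/
lemma real_fderiv_eq_wirtinger (f : ℂ → ℝ) (w : ℂ) (hf : DifferentiableAt ℝ f w) (h : ℂ) :
    ((fderiv ℝ f w h : ℝ) : ℂ) =
      wirtingerDeriv (fun ζ => (f ζ : ℂ)) w * h +
      (starRingEnd ℂ) (wirtingerDeriv (fun ζ => (f ζ : ℂ)) w * h) := by
  have hg : fderiv ℝ (fun ζ => (f ζ : ℂ)) w = Complex.ofRealCLM.comp (fderiv ℝ f w) :=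
    (Complex.ofRealCLM.hasFDerivAt.comp w hf.hasFDerivAt).fderiv
  have hh : h = h.re • (1:ℂ) + h.im • Complex.I := by
    simp [Complex.real_smul, Complex.re_add_im]
  unfold wirtingerDeriv
  rw [hg]
  simp only [ContinuousLinearMap.comp_apply, Complex.ofRealCLM_apply]
  rw [hh]
  rw [map_add, map_smul, map_smul]
  set a := h.re
  set b := h.im
  set c := fderiv ℝ f w 1
  set d := fderiv ℝ f w Complex.I
  simp only [smul_eq_mul, Complex.real_smul, map_add, map_mul, map_sub, map_div₀,
    Complex.conj_I, Complex.conj_ofReal, map_one, map_ofNat]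
  push_cast
  ring_nf
  rw [Complex.I_sq]
  ring

/-- Ampère's intrinsic Euler–Lagrange equation. -/
theorem stmt5 (U : Set ℂ) (hU : IsOpen U) (X Y s t : ℂ → ℝ)
    (hX : ContDiffOn ℝ 1 X U) (hY : ContDiffOn ℝ 1 Y U)
    (hs : ContDiffOn ℝ 1 s U) (ht : ContDiffOn ℝ 1 t U)
    (κ : ℂ → ℝ)
    (hκX : ∀ w ∈ U, wirtingerDeriv (fun ζ => (X ζ : ℂ)) w =
      -Complex.I * (κ w : ℂ) * wirtingerDeriv (fun ζ => (t ζ : ℂ)) w)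
    (hκY : ∀ w ∈ U, wirtingerDeriv (fun ζ => (Y ζ : ℂ)) w =
      Complex.I * (κ w : ℂ) * wirtingerDeriv (fun ζ => (s ζ : ℂ)) w)
    (Ω : Set (ℝ × ℝ)) (hΩ : IsOpen Ω) (z : ℝ × ℝ → ℂ)
    (hz : ContDiffOn ℝ 1 z Ω) (hzU : ∀ p ∈ Ω, z p ∈ U)
    (hEL : ∀ p ∈ Ω, fderiv ℝ (fun q => X (z q)) p (1, 0) +
      fderiv ℝ (fun q => Y (z q)) p (0, 1) = 0)
    (hcurl : ∀ p ∈ Ω, fderiv ℝ (fun q => t (z q)) p (1, 0) =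
      fderiv ℝ (fun q => s (z q)) p (0, 1)) :
    ∀ p ∈ Ω,
      wirtingerDeriv (fun ζ => (X ζ : ℂ)) (z p) * fderiv ℝ z p (1, 0) +
      wirtingerDeriv (fun ζ => (Y ζ : ℂ)) (z p) * fderiv ℝ z p (0, 1) = 0 := by
  intro p hp
  set w := z p with hw
  have hwU : w ∈ U := hzU p hp
  have hzd : DifferentiableAt ℝ z p :=
    (hz.contDiffAt (hΩ.mem_nhds hp)).differentiableAt one_ne_zero
  have hXd : DifferentiableAt ℝ X w :=
    (hX.contDiffAt (hU.mem_nhds hwU)).differentiableAt one_ne_zero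
  have hYd : DifferentiableAt ℝ Y w :=
    (hY.contDiffAt (hU.mem_nhds hwU)).differentiableAt one_ne_zero
  have hsd : DifferentiableAt ℝ s w :=
    (hs.contDiffAt (hU.mem_nhds hwU)).differentiableAt one_ne_zero
  have htd : DifferentiableAt ℝ t w :=
    (ht.contDiffAt (hU.mem_nhds hwU)).differentiableAt one_ne_zero
  have comp_eq : ∀ (f : ℂ → ℝ), DifferentiableAt ℝ f w → ∀ v : ℝ × ℝ,
      fderiv ℝ (fun q => f (z q)) p v = fderiv ℝ f w (fderiv ℝ z p v) := by
    intro f hf v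
    have : fderiv ℝ (f ∘ z) p = (fderiv ℝ f w).comp (fderiv ℝ z p) :=
      fderiv_comp p hf hzd
    have h2 : fderiv ℝ (fun q => f (z q)) p = (fderiv ℝ f w).comp (fderiv ℝ z p) := this
    rw [h2]; rfl
  set zx := fderiv ℝ z p (1, 0)
  set zy := fderiv ℝ z p (0, 1)
  set WX := wirtingerDeriv (fun ζ => (X ζ : ℂ)) w with hWXd
  set WY := wirtingerDeriv (fun ζ => (Y ζ : ℂ)) w with hWYd
  set Ws := wirtingerDeriv (fun ζ => (s ζ : ℂ)) w with hWsd
  set Wt := wirtingerDeriv (fun ζ => (t ζ : ℂ)) w with hWtd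
  have hEL' : ((fderiv ℝ X w zx : ℝ) : ℂ) + ((fderiv ℝ Y w zy : ℝ) : ℂ) = 0 := by
    have := hEL p hp
    rw [comp_eq X hXd, comp_eq Y hYd] at this
    exact_mod_cast congrArg (fun r : ℝ => (r : ℂ)) this
  have hcurl' : ((fderiv ℝ t w zx : ℝ) : ℂ) = ((fderiv ℝ s w zy : ℝ) : ℂ) := by
    have := hcurl p hp
    rw [comp_eq t htd, comp_eq s hsd] at this
    exact_mod_cast this
  rw [real_fderiv_eq_wirtinger X w hXd zx, real_fderiv_eq_wirtinger Y w hYd zy] at hEL'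
  rw [real_fderiv_eq_wirtinger t w htd zx, real_fderiv_eq_wirtinger s w hsd zy] at hcurl'
  have hWX := hκX w hwU
  have hWY := hκY w hwU
  have hconjB : (starRingEnd ℂ) (Ws * zy - Wt * zx) = -(Ws * zy - Wt * zx) := by
    rw [map_sub]
    linear_combination -hcurl'
  have hR_eq : WX * zx + WY * zy = Complex.I * (κ w : ℂ) * (Ws * zy - Wt * zx) := by
    rw [hWXd, hWYd, hWsd, hWtd, hWX, hWY]; ring
  have hconjR : (starRingEnd ℂ) (WX * zx + WY * zy) = WX * zx + WY * zy := by
    rw [hR_eq, map_mul, map_mul, hconjB, Complex.conj_I, Complex.conj_ofReal]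
    ring
  have hsum : (WX * zx + WY * zy) + (starRingEnd ℂ) (WX * zx + WY * zy) = 0 := by
    rw [map_add]
    linear_combination hEL'
  rw [hconjR] at hsum
  linear_combination hsum / 2
end

section
/- Let U ⊆ ℂ be open and let s, t, ψ, x, y, h : U → ℝ all be twice continuously differentiable functions of z ∈ U. Suppose on U: (1) (sψ)_{z z̄} = s ψ_{z z̄} and (tψ)_{z z̄} = t ψ_{z z̄}; (2) h_z = s x_z + t y_z; (3) s_z x_{z̄} + t_z y_{z̄} = 0. Then on U the intercept function c = h − (s x + t y) satisfies ((h − (s x + t y)) ψ)_{z z̄} = (h − (s x + t y)) ψ_{z z̄}. In particular, if additionally ψ > 0, then cψ solves the Schrödinger equation (−Δ + q)(cψ) = 0 with q = Δψ/ψ, i.e. the intercept function c is κ-harmonic with κ = ψ². -/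
/-- The conjugate Wirtinger derivative `f_z̄ = ½(∂f/∂u + i ∂f/∂v)` of `f : ℂ → ℂ`. -/
noncomputable def wirtingerDerivBar (f : ℂ → ℂ) (z : ℂ) : ℂ :=
  (fderiv ℝ f z 1 + Complex.I * fderiv ℝ f z Complex.I) / 2

/-- The Laplacian `Δf = ∂²f/∂u² + ∂²f/∂v²` of a real-valued function on `ℂ`,
in the real coordinates `z = u + iv`. -/
noncomputable def lapC (f : ℂ → ℝ) (z : ℂ) : ℝ :=
  fderiv ℝ (fun w => fderiv ℝ f w 1) z 1 +
    fderiv ℝ (fun w => fderiv ℝ f w Complex.I) z Complex.I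

lemma wd_congr {f g : ℂ → ℂ} {z : ℂ} (h : f =ᶠ[nhds z] g) :
    wirtingerDeriv f z = wirtingerDeriv g z := by
  unfold wirtingerDeriv; rw [h.fderiv_eq]

lemma wb_congr {f g : ℂ → ℂ} {z : ℂ} (h : f =ᶠ[nhds z] g) :
    wirtingerDerivBar f z = wirtingerDerivBar g z := by
  unfold wirtingerDerivBar; rw [h.fderiv_eq]

lemma wd_add {f g : ℂ → ℂ} {z : ℂ} (hf : DifferentiableAt ℝ f z)
    (hg : DifferentiableAt ℝ g z) :
    wirtingerDeriv (fun ζ => f ζ + g ζ) z = wirtingerDeriv f z + wirtingerDeriv g z := by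
  unfold wirtingerDeriv; rw [fderiv_fun_add hf hg]; simp; ring

lemma wd_sub {f g : ℂ → ℂ} {z : ℂ} (hf : DifferentiableAt ℝ f z)
    (hg : DifferentiableAt ℝ g z) :
    wirtingerDeriv (fun ζ => f ζ - g ζ) z = wirtingerDeriv f z - wirtingerDeriv g z := by
  unfold wirtingerDeriv; rw [fderiv_fun_sub hf hg]; simp; ring

lemma wd_neg {f : ℂ → ℂ} {z : ℂ} :
    wirtingerDeriv (fun ζ => -f ζ) z = -wirtingerDeriv f z := by
  unfold wirtingerDeriv; rw [fderiv_fun_neg]; simp; ring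

lemma wd_mul {f g : ℂ → ℂ} {z : ℂ} (hf : DifferentiableAt ℝ f z)
    (hg : DifferentiableAt ℝ g z) :
    wirtingerDeriv (fun ζ => f ζ * g ζ) z =
      wirtingerDeriv f z * g z + f z * wirtingerDeriv g z := by
  unfold wirtingerDeriv; rw [fderiv_fun_mul hf hg]; simp [smul_eq_mul]; ring

lemma wb_add {f g : ℂ → ℂ} {z : ℂ} (hf : DifferentiableAt ℝ f z)
    (hg : DifferentiableAt ℝ g z) :
    wirtingerDerivBar (fun ζ => f ζ + g ζ) z =
      wirtingerDerivBar f z + wirtingerDerivBar g z := by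
  unfold wirtingerDerivBar; rw [fderiv_fun_add hf hg]; simp; ring

lemma wb_sub {f g : ℂ → ℂ} {z : ℂ} (hf : DifferentiableAt ℝ f z)
    (hg : DifferentiableAt ℝ g z) :
    wirtingerDerivBar (fun ζ => f ζ - g ζ) z =
      wirtingerDerivBar f z - wirtingerDerivBar g z := by
  unfold wirtingerDerivBar; rw [fderiv_fun_sub hf hg]; simp; ring

lemma wb_neg {f : ℂ → ℂ} {z : ℂ} :
    wirtingerDerivBar (fun ζ => -f ζ) z = -wirtingerDerivBar f z := by
  unfold wirtingerDerivBar; rw [fderiv_fun_neg]; simp; ring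

lemma wb_mul {f g : ℂ → ℂ} {z : ℂ} (hf : DifferentiableAt ℝ f z)
    (hg : DifferentiableAt ℝ g z) :
    wirtingerDerivBar (fun ζ => f ζ * g ζ) z =
      wirtingerDerivBar f z * g z + f z * wirtingerDerivBar g z := by
  unfold wirtingerDerivBar; rw [fderiv_fun_mul hf hg]; simp [smul_eq_mul]; ring

lemma fderiv_ofReal' {f : ℂ → ℝ} {z : ℂ} (hf : DifferentiableAt ℝ f z) (v : ℂ) :
    fderiv ℝ (fun ζ => (f ζ : ℂ)) z v = (fderiv ℝ f z v : ℂ) := by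
  have : fderiv ℝ (fun ζ => (f ζ : ℂ)) z = Complex.ofRealCLM.comp (fderiv ℝ f z) :=
    (Complex.ofRealCLM.hasFDerivAt.comp z hf.hasFDerivAt).fderiv
  rw [this]; rfl

lemma wb_real {f : ℂ → ℝ} {z : ℂ} (hf : DifferentiableAt ℝ f z) :
    wirtingerDerivBar (fun ζ => (f ζ : ℂ)) z =
      starRingEnd ℂ (wirtingerDeriv (fun ζ => (f ζ : ℂ)) z) := by
  unfold wirtingerDeriv wirtingerDerivBar
  rw [fderiv_ofReal' hf, fderiv_ofReal' hf]
  rw [map_div₀, map_sub, map_mul]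
  simp [Complex.conj_ofReal, map_ofNat]

lemma contDiffAt_ofReal {f : ℂ → ℝ} {z : ℂ} (hf : ContDiffAt ℝ 2 f z) :
    ContDiffAt ℝ 2 (fun ζ => (f ζ : ℂ)) z :=
  Complex.ofRealCLM.contDiff.contDiffAt.comp z hf

lemma diff_fderiv_apply {E : Type*} [NormedAddCommGroup E] [NormedSpace ℝ E] {F : ℂ → E} {z : ℂ} (hF : ContDiffAt ℝ 2 F z) (v : ℂ) :
    DifferentiableAt ℝ (fun ζ => fderiv ℝ F ζ v) z := by
  have h1 : ContDiffAt ℝ 1 (fderiv ℝ F) z := hF.fderiv_right (by norm_num)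
  exact (h1.differentiableAt one_ne_zero).clm_apply (differentiableAt_const v)

lemma wd_diff {F : ℂ → ℂ} {z : ℂ} (hF : ContDiffAt ℝ 2 F z) :
    DifferentiableAt ℝ (wirtingerDeriv F) z := by
  have h1 := diff_fderiv_apply hF 1
  have h2 := diff_fderiv_apply hF Complex.I
  have : wirtingerDeriv F = fun ζ =>
      (fderiv ℝ F ζ 1 - Complex.I * fderiv ℝ F ζ Complex.I) * (2:ℂ)⁻¹ := by
    funext ζ; rw [wirtingerDeriv, div_eq_mul_inv]
  rw [this]
  exact (h1.sub (h2.const_mul Complex.I)).mul_const _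

lemma fderiv_fderiv_apply {E : Type*} [NormedAddCommGroup E] [NormedSpace ℝ E] {F : ℂ → E} {z : ℂ} (hF : ContDiffAt ℝ 2 F z) (v w : ℂ) :
    fderiv ℝ (fun ζ => fderiv ℝ F ζ v) z w = fderiv ℝ (fderiv ℝ F) z w v := by
  have h1 : DifferentiableAt ℝ (fderiv ℝ F) z :=
    (hF.fderiv_right (m := 1) (by norm_num)).differentiableAt one_ne_zero
  rw [fderiv_clm_apply h1 (differentiableAt_const v)]
  simp


lemma lap_eq {f : ℂ → ℝ} {z : ℂ} (hf : ContDiffAt ℝ 2 f z) :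
    (lapC f z : ℂ) = 4 * wirtingerDerivBar (wirtingerDeriv (fun ζ => (f ζ : ℂ))) z := by
  set F : ℂ → ℂ := fun ζ => (f ζ : ℂ) with hFdef
  have hF : ContDiffAt ℝ 2 F z := contDiffAt_ofReal hf
  have hev : ∀ᶠ ζ in nhds z, ContDiffAt ℝ 2 f ζ := hf.eventually (by simp)
  have hpv : ∀ v : ℂ, (fun ζ => fderiv ℝ F ζ v) =ᶠ[nhds z]
      (fun ζ => ((fderiv ℝ f ζ v : ℝ) : ℂ)) := by
    intro v
    filter_upwards [hev] with ζ hζ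
    exact fderiv_ofReal' (hζ.differentiableAt two_ne_zero) v
  have hgd : ∀ v : ℂ, DifferentiableAt ℝ (fun ζ => fderiv ℝ f ζ v) z :=
    fun v => diff_fderiv_apply hf v
  have key : ∀ v w : ℂ, fderiv ℝ (fun ζ => fderiv ℝ F ζ v) z w =
      ((fderiv ℝ (fderiv ℝ f) z w v : ℝ) : ℂ) := by
    intro v w
    rw [(hpv v).fderiv_eq]
    have : fderiv ℝ (fun ζ => ((fderiv ℝ f ζ v : ℝ) : ℂ)) z w
        = ((fderiv ℝ (fun ζ => fderiv ℝ f ζ v) z w : ℝ) : ℂ) :=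
      fderiv_ofReal' (hgd v) w
    rw [this, fderiv_fderiv_apply hf]
  have hWD : wirtingerDeriv F = fun ζ =>
      (fderiv ℝ F ζ 1 - Complex.I * fderiv ℝ F ζ Complex.I) * (2:ℂ)⁻¹ := by
    funext ζ; rw [wirtingerDeriv, div_eq_mul_inv]
  have hd1 := diff_fderiv_apply hF (1:ℂ)
  have hdI := diff_fderiv_apply hF Complex.I
  have hA : ∀ w : ℂ, fderiv ℝ (wirtingerDeriv F) z w =
      (fderiv ℝ (fun ζ => fderiv ℝ F ζ 1) z w
        - Complex.I * fderiv ℝ (fun ζ => fderiv ℝ F ζ Complex.I) z w) * (2:ℂ)⁻¹ := by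
    intro w
    rw [hWD]
    rw [fderiv_mul_const ((hd1.fun_sub (hdI.const_mul Complex.I)) : _)]
    rw [fderiv_fun_sub hd1 (hdI.const_mul Complex.I)]
    rw [fderiv_const_mul hdI]
    simp [smul_eq_mul]
    ring
  have hsymm : fderiv ℝ (fderiv ℝ f) z 1 Complex.I
      = fderiv ℝ (fderiv ℝ f) z Complex.I 1 :=
    (hf.isSymmSndFDerivAt (by norm_num)) 1 Complex.I
  have hlap : lapC f z = fderiv ℝ (fderiv ℝ f) z 1 1
      + fderiv ℝ (fderiv ℝ f) z Complex.I Complex.I := by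
    rw [lapC, fderiv_fderiv_apply hf, fderiv_fderiv_apply hf]
  rw [wirtingerDerivBar, hA, hA, key, key, key, key, hlap, hsymm]
  push_cast
  ring_nf
  rw [Complex.I_sq]
  ring

theorem stmt9 (U : Set ℂ) (hU : IsOpen U) (s t ψ x y h : ℂ → ℝ)
    (hs : ContDiffOn ℝ 2 s U) (ht : ContDiffOn ℝ 2 t U) (hψ : ContDiffOn ℝ 2 ψ U)
    (hx : ContDiffOn ℝ 2 x U) (hy : ContDiffOn ℝ 2 y U) (hh : ContDiffOn ℝ 2 h U)
    (h1s : ∀ z ∈ U,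
      wirtingerDerivBar (wirtingerDeriv (fun ζ => ((s ζ * ψ ζ : ℝ) : ℂ))) z =
        (s z : ℂ) * wirtingerDerivBar (wirtingerDeriv (fun ζ => (ψ ζ : ℂ))) z)
    (h1t : ∀ z ∈ U,
      wirtingerDerivBar (wirtingerDeriv (fun ζ => ((t ζ * ψ ζ : ℝ) : ℂ))) z =
        (t z : ℂ) * wirtingerDerivBar (wirtingerDeriv (fun ζ => (ψ ζ : ℂ))) z)
    (h2 : ∀ z ∈ U,
      wirtingerDeriv (fun ζ => (h ζ : ℂ)) z =
        (s z : ℂ) * wirtingerDeriv (fun ζ => (x ζ : ℂ)) z +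
        (t z : ℂ) * wirtingerDeriv (fun ζ => (y ζ : ℂ)) z)
    (h3 : ∀ z ∈ U,
      wirtingerDeriv (fun ζ => (s ζ : ℂ)) z * wirtingerDerivBar (fun ζ => (x ζ : ℂ)) z +
      wirtingerDeriv (fun ζ => (t ζ : ℂ)) z * wirtingerDerivBar (fun ζ => (y ζ : ℂ)) z
        = 0) :
    (∀ z ∈ U,
      wirtingerDerivBar (wirtingerDeriv
          (fun ζ => (((h ζ - (s ζ * x ζ + t ζ * y ζ)) * ψ ζ : ℝ) : ℂ))) z =
        ((h z - (s z * x z + t z * y z) : ℝ) : ℂ) *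
          wirtingerDerivBar (wirtingerDeriv (fun ζ => (ψ ζ : ℂ))) z) ∧
    ((∀ z ∈ U, 0 < ψ z) →
      ∀ z ∈ U,
        -lapC (fun ζ => (h ζ - (s ζ * x ζ + t ζ * y ζ)) * ψ ζ) z +
          (lapC ψ z / ψ z) * ((h z - (s z * x z + t z * y z)) * ψ z) = 0) := by
  have pack : ∀ f : ℂ → ℝ, ContDiffOn ℝ 2 f U → ∀ ζ ∈ U,
      DifferentiableAt ℝ f ζ ∧ DifferentiableAt ℝ (fun ξ => (f ξ : ℂ)) ζ ∧
      DifferentiableAt ℝ (wirtingerDeriv (fun ξ => (f ξ : ℂ))) ζ := by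
    intro f hf ζ hζ
    have d1 : ContDiffAt ℝ 2 f ζ := hf.contDiffAt (hU.mem_nhds hζ)
    have d2 : ContDiffAt ℝ 2 (fun ξ => (f ξ : ℂ)) ζ := contDiffAt_ofReal d1
    exact ⟨d1.differentiableAt two_ne_zero, d2.differentiableAt two_ne_zero, wd_diff d2⟩
  have Ps := pack s hs
  have Pt := pack t ht
  have Pψ := pack ψ hψ
  have Px := pack x hx
  have Py := pack y hy
  have Ph := pack h hh
  have hfs : (fun ζ => ((s ζ * ψ ζ : ℝ) : ℂ)) = fun ζ => (s ζ : ℂ) * (ψ ζ : ℂ) := by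
    funext ζ; push_cast; ring
  have hft : (fun ζ => ((t ζ * ψ ζ : ℝ) : ℂ)) = fun ζ => (t ζ : ℂ) * (ψ ζ : ℂ) := by
    funext ζ; push_cast; ring
  have hfc : (fun ζ => (((h ζ - (s ζ * x ζ + t ζ * y ζ)) * ψ ζ : ℝ) : ℂ)) =
      fun ζ => ((h ζ : ℂ) - ((s ζ : ℂ) * (x ζ : ℂ) + (t ζ : ℂ) * (y ζ : ℂ))) * (ψ ζ : ℂ) := by
    funext ζ; push_cast; ring
  rw [hfs] at h1s
  rw [hft] at h1t
  have dC : ∀ ζ ∈ U, DifferentiableAt ℝ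
      (fun ξ => ((h ξ : ℂ) - ((s ξ : ℂ) * (x ξ : ℂ) + (t ξ : ℂ) * (y ξ : ℂ)))) ζ := by
    intro ζ hζ
    exact ((Ph ζ hζ).2.1).sub ((((Ps ζ hζ).2.1).mul ((Px ζ hζ).2.1)).add
      (((Pt ζ hζ).2.1).mul ((Py ζ hζ).2.1)))
  have hWC : ∀ ζ ∈ U, wirtingerDeriv
      (fun ξ => ((h ξ : ℂ) - ((s ξ : ℂ) * (x ξ : ℂ) + (t ξ : ℂ) * (y ξ : ℂ)))) ζ =
      -(wirtingerDeriv (fun ξ => (s ξ : ℂ)) ζ * (x ζ : ℂ) +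
        wirtingerDeriv (fun ξ => (t ξ : ℂ)) ζ * (y ζ : ℂ)) := by
    intro ζ hζ
    rw [wd_sub (Ph ζ hζ).2.1 ((((Ps ζ hζ).2.1).fun_mul ((Px ζ hζ).2.1)).fun_add
      (((Pt ζ hζ).2.1).fun_mul ((Py ζ hζ).2.1)))]
    rw [wd_add (((Ps ζ hζ).2.1).fun_mul ((Px ζ hζ).2.1)) (((Pt ζ hζ).2.1).fun_mul ((Py ζ hζ).2.1))]
    rw [wd_mul (Ps ζ hζ).2.1 (Px ζ hζ).2.1, wd_mul (Pt ζ hζ).2.1 (Py ζ hζ).2.1]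
    rw [h2 ζ hζ]
    ring
  have key : ∀ z ∈ U,
      wirtingerDerivBar (wirtingerDeriv
          (fun ζ => (((h ζ - (s ζ * x ζ + t ζ * y ζ)) * ψ ζ : ℝ) : ℂ))) z =
        ((h z - (s z * x z + t z * y z) : ℝ) : ℂ) *
          wirtingerDerivBar (wirtingerDeriv (fun ζ => (ψ ζ : ℂ))) z := by
    intro z hz
    rw [hfc]
    have dS := (Ps z hz).2.1
    have dT := (Pt z hz).2.1
    have dΨ := (Pψ z hz).2.1
    have dX := (Px z hz).2.1
    have dY := (Py z hz).2.1
    have dWS := (Ps z hz).2.2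
    have dWT := (Pt z hz).2.2
    have dWΨ := (Pψ z hz).2.2
    have dCz := dC z hz
    have ev1 : wirtingerDeriv
        (fun ξ => ((h ξ : ℂ) - ((s ξ : ℂ) * (x ξ : ℂ) + (t ξ : ℂ) * (y ξ : ℂ))) * (ψ ξ : ℂ))
        =ᶠ[nhds z]
        (fun ξ => (-(wirtingerDeriv (fun ρ => (s ρ : ℂ)) ξ * (x ξ : ℂ) +
            wirtingerDeriv (fun ρ => (t ρ : ℂ)) ξ * (y ξ : ℂ))) * (ψ ξ : ℂ) +
          ((h ξ : ℂ) - ((s ξ : ℂ) * (x ξ : ℂ) + (t ξ : ℂ) * (y ξ : ℂ))) *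
            wirtingerDeriv (fun ρ => (ψ ρ : ℂ)) ξ) := by
      filter_upwards [hU.mem_nhds hz] with ζ hζ
      rw [wd_mul (dC ζ hζ) (Pψ ζ hζ).2.1, hWC ζ hζ]
    rw [wb_congr ev1]
    have dA1 : DifferentiableAt ℝ
        (fun ξ => -(wirtingerDeriv (fun ρ => (s ρ : ℂ)) ξ * (x ξ : ℂ) +
            wirtingerDeriv (fun ρ => (t ρ : ℂ)) ξ * (y ξ : ℂ))) z :=
      ((dWS.mul dX).add (dWT.mul dY)).neg
    rw [wb_add (dA1.fun_mul dΨ) (dCz.fun_mul dWΨ), wb_mul dA1 dΨ, wb_neg,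
      wb_add (dWS.fun_mul dX) (dWT.fun_mul dY), wb_mul dWS dX, wb_mul dWT dY,
      wb_mul dCz dWΨ]
    have hWbH : wirtingerDerivBar (fun ξ => (h ξ : ℂ)) z =
        (s z : ℂ) * wirtingerDerivBar (fun ξ => (x ξ : ℂ)) z +
        (t z : ℂ) * wirtingerDerivBar (fun ξ => (y ξ : ℂ)) z := by
      rw [wb_real (Ph z hz).1, h2 z hz, map_add, map_mul, map_mul,
        Complex.conj_ofReal, Complex.conj_ofReal,
        ← wb_real (Px z hz).1, ← wb_real (Py z hz).1]
    have hWbC : wirtingerDerivBar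
        (fun ξ => ((h ξ : ℂ) - ((s ξ : ℂ) * (x ξ : ℂ) + (t ξ : ℂ) * (y ξ : ℂ)))) z =
        -(wirtingerDerivBar (fun ξ => (s ξ : ℂ)) z * (x z : ℂ) +
          wirtingerDerivBar (fun ξ => (t ξ : ℂ)) z * (y z : ℂ)) := by
      rw [wb_sub (Ph z hz).2.1 ((dS.fun_mul dX).fun_add (dT.fun_mul dY)),
        wb_add (dS.fun_mul dX) (dT.fun_mul dY), wb_mul dS dX, wb_mul dT dY, hWbH]
      ring
    have evS : wirtingerDeriv (fun ξ => (s ξ : ℂ) * (ψ ξ : ℂ)) =ᶠ[nhds z]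
        (fun ξ => wirtingerDeriv (fun ρ => (s ρ : ℂ)) ξ * (ψ ξ : ℂ) +
          (s ξ : ℂ) * wirtingerDeriv (fun ρ => (ψ ρ : ℂ)) ξ) := by
      filter_upwards [hU.mem_nhds hz] with ζ hζ
      rw [wd_mul (Ps ζ hζ).2.1 (Pψ ζ hζ).2.1]
    have evT : wirtingerDeriv (fun ξ => (t ξ : ℂ) * (ψ ξ : ℂ)) =ᶠ[nhds z]
        (fun ξ => wirtingerDeriv (fun ρ => (t ρ : ℂ)) ξ * (ψ ξ : ℂ) +
          (t ξ : ℂ) * wirtingerDeriv (fun ρ => (ψ ρ : ℂ)) ξ) := by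
      filter_upwards [hU.mem_nhds hz] with ζ hζ
      rw [wd_mul (Pt ζ hζ).2.1 (Pψ ζ hζ).2.1]
    have Es := h1s z hz
    rw [wb_congr evS, wb_add (dWS.fun_mul dΨ) (dS.fun_mul dWΨ), wb_mul dWS dΨ,
      wb_mul dS dWΨ] at Es
    have Et := h1t z hz
    rw [wb_congr evT, wb_add (dWT.fun_mul dΨ) (dT.fun_mul dWΨ), wb_mul dWT dΨ,
      wb_mul dT dWΨ] at Et
    have E3 := h3 z hz
    rw [hWbC]
    push_cast
    linear_combination (-(x z : ℂ)) * Es + (-(y z : ℂ)) * Et + (-(ψ z : ℂ)) * E3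
  refine ⟨key, ?_⟩
  intro hpos z hz
  have hψz : ψ z ≠ 0 := ne_of_gt (hpos z hz)
  have A : ∀ f : ℂ → ℝ, ContDiffOn ℝ 2 f U → ContDiffAt ℝ 2 f z :=
    fun f hf => hf.contDiffAt (hU.mem_nhds hz)
  have hcψ : ContDiffAt ℝ 2 (fun ζ => (h ζ - (s ζ * x ζ + t ζ * y ζ)) * ψ ζ) z :=
    ((A h hh).sub (((A s hs).mul (A x hx)).add ((A t ht).mul (A y hy)))).mul (A ψ hψ)
  have l1 := lap_eq hcψ
  have l2 := lap_eq (A ψ hψ)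
  have e : ((lapC (fun ζ => (h ζ - (s ζ * x ζ + t ζ * y ζ)) * ψ ζ) z : ℝ) : ℂ)
      = (((h z - (s z * x z + t z * y z)) * lapC ψ z : ℝ) : ℂ) := by
    rw [l1, key z hz]
    push_cast
    linear_combination (-((h z : ℂ) - ((s z : ℂ) * (x z : ℂ) + (t z : ℂ) * (y z : ℂ)))) * l2
  have e2 : lapC (fun ζ => (h ζ - (s ζ * x ζ + t ζ * y ζ)) * ψ ζ) z
      = (h z - (s z * x z + t z * y z)) * lapC ψ z := by exact_mod_cast e
  rw [e2]
  field_simp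
  ring
end

section
/- Let σ(s, t) = −(1 + log(cos(πs)/(πt))) · t for (s, t) ∈ (−1/2, 1/2) × (0, ∞) (the surface tension for random Young tableaux). Then its second partial derivatives are σ_ss = π² t sec²(πs), σ_st = π tan(πs), σ_tt = 1/t, and its Hessian determinant is identically π²: σ_ss σ_tt − σ_st² = π² at every point of (−1/2, 1/2) × (0, ∞). In particular σ has trivial potential. -/
open Real


private noncomputable def Pfst : ℝ × ℝ →L[ℝ] ℝ := ContinuousLinearMap.fst ℝ ℝ ℝ
private noncomputable def Psnd : ℝ × ℝ →L[ℝ] ℝ := ContinuousLinearMap.snd ℝ ℝ ℝ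

private lemma hLcos (p : ℝ × ℝ) (hc : Real.cos (π * p.1) ≠ 0) :
    HasFDerivAt (fun q : ℝ × ℝ => Real.log (Real.cos (π * q.1)))
      ((Real.cos (π * p.1))⁻¹ • ((-Real.sin (π * p.1)) • (π • Pfst))) p := by
  have h1 : HasFDerivAt (fun q : ℝ × ℝ => π * q.1) (π • Pfst) p :=
    (hasFDerivAt_fst).const_mul π
  have h2 := (Real.hasDerivAt_cos (π * p.1)).comp_hasFDerivAt p h1
  exact (Real.hasDerivAt_log hc).comp_hasFDerivAt p h2

private lemma hLpit (p : ℝ × ℝ) (ht : π * p.2 ≠ 0) :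
    HasFDerivAt (fun q : ℝ × ℝ => Real.log (π * q.2))
      ((π * p.2)⁻¹ • (π • Psnd)) p := by
  have h1 : HasFDerivAt (fun q : ℝ × ℝ => π * q.2) (π • Psnd) p :=
    (hasFDerivAt_snd).const_mul π
  exact (Real.hasDerivAt_log ht).comp_hasFDerivAt p h1

private lemma hTan (p : ℝ × ℝ) (hc : Real.cos (π * p.1) ≠ 0) :
    HasFDerivAt (fun q : ℝ × ℝ => Real.tan (π * q.1))
      ((1 / Real.cos (π * p.1) ^ 2) • (π • Pfst)) p := by
  have h1 : HasFDerivAt (fun q : ℝ × ℝ => π * q.1) (π • Pfst) p :=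
    (hasFDerivAt_fst).const_mul π
  exact (Real.hasDerivAt_tan hc).comp_hasFDerivAt p h1

private lemma hSigma (p : ℝ × ℝ) (hc : Real.cos (π * p.1) ≠ 0) (ht : π * p.2 ≠ 0) :
    HasFDerivAt (fun q : ℝ × ℝ =>
        -(1 + Real.log (Real.cos (π * q.1)) - Real.log (π * q.2)) * q.2)
      ((-(1 + Real.log (Real.cos (π * p.1)) - Real.log (π * p.2))) • Psnd +
        p.2 • (-(((Real.cos (π * p.1))⁻¹ • ((-Real.sin (π * p.1)) • (π • Pfst))) -
          ((π * p.2)⁻¹ • (π • Psnd))))) p := by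
  have hA := (((hLcos p hc).const_add 1).sub (hLpit p ht)).neg
  exact hA.mul (hasFDerivAt_snd)


theorem stmt13 (σ : ℝ × ℝ → ℝ)
    (hσ : σ = fun p =>
      -(1 + Real.log (Real.cos (Real.pi * p.1) / (Real.pi * p.2))) * p.2)
    (N : Set (ℝ × ℝ)) (hN : N = Set.Ioo (-(1 / 2) : ℝ) (1 / 2) ×ˢ Set.Ioi (0 : ℝ)) :
    ∀ p ∈ N,
      pd1 (pd1 σ) p = Real.pi ^ 2 * p.2 * (1 / Real.cos (Real.pi * p.1) ^ 2) ∧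
      pd2 (pd1 σ) p = Real.pi * Real.tan (Real.pi * p.1) ∧
      pd2 (pd2 σ) p = 1 / p.2 ∧
      pd1 (pd1 σ) p * pd2 (pd2 σ) p - pd2 (pd1 σ) p ^ 2 = Real.pi ^ 2 := by
  have hNopen : IsOpen N := by rw [hN]; exact (isOpen_Ioo).prod isOpen_Ioi
  have hcos : ∀ p ∈ N, 0 < Real.cos (π * p.1) := by
    intro p hp
    rw [hN] at hp
    obtain ⟨⟨h1, h2⟩, _⟩ := hp
    apply Real.cos_pos_of_mem_Ioo
    constructor
    · have := Real.pi_pos; nlinarith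
    · have := Real.pi_pos; nlinarith
  have htpos : ∀ p ∈ N, 0 < p.2 := by
    intro p hp; rw [hN] at hp; exact hp.2
  have hEq : ∀ p ∈ N, σ p =
      -(1 + Real.log (Real.cos (π * p.1)) - Real.log (π * p.2)) * p.2 := by
    intro p hp
    have ht : π * p.2 ≠ 0 := by
      have := htpos p hp; have := Real.pi_pos; positivity
    rw [hσ]
    simp only
    rw [Real.log_div (ne_of_gt (hcos p hp)) ht]
    ring
  have h1 : ∀ p ∈ N, pd1 σ p = π * p.2 * Real.tan (π * p.1) := by
    intro p hp
    have hc := (hcos p hp).ne'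
    have ht : π * p.2 ≠ 0 := by
      have := htpos p hp; have := Real.pi_pos; positivity
    have heq : σ =ᶠ[nhds p] (fun q : ℝ × ℝ =>
        -(1 + Real.log (Real.cos (π * q.1)) - Real.log (π * q.2)) * q.2) :=
      Filter.eventuallyEq_of_mem (hNopen.mem_nhds hp) hEq
    have hD := hSigma p hc ht
    unfold pd1
    rw [heq.fderiv_eq, hD.fderiv]
    simp [Pfst, Psnd, Real.tan_eq_sin_div_cos]
    field_simp
  have h2 : ∀ p ∈ N, pd2 σ p = Real.log (π * p.2) - Real.log (Real.cos (π * p.1)) := by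
    intro p hp
    have hc := (hcos p hp).ne'
    have ht0 := (htpos p hp).ne'
    have ht : π * p.2 ≠ 0 := by
      have := htpos p hp; have := Real.pi_pos; positivity
    have heq : σ =ᶠ[nhds p] (fun q : ℝ × ℝ =>
        -(1 + Real.log (Real.cos (π * q.1)) - Real.log (π * q.2)) * q.2) :=
      Filter.eventuallyEq_of_mem (hNopen.mem_nhds hp) hEq
    have hD := hSigma p hc ht
    unfold pd2
    rw [heq.fderiv_eq, hD.fderiv]
    simp [Pfst, Psnd]
    field_simp
    ring
  intro p hp
  have hc := (hcos p hp).ne'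
  have ht0 := (htpos p hp).ne'
  have ht : π * p.2 ≠ 0 := by
    have := htpos p hp; have := Real.pi_pos; positivity
  have heq1 : pd1 σ =ᶠ[nhds p] (fun q : ℝ × ℝ => π * q.2 * Real.tan (π * q.1)) :=
    Filter.eventuallyEq_of_mem (hNopen.mem_nhds hp) h1
  have heq2 : pd2 σ =ᶠ[nhds p] (fun q : ℝ × ℝ =>
      Real.log (π * q.2) - Real.log (Real.cos (π * q.1))) :=
    Filter.eventuallyEq_of_mem (hNopen.mem_nhds hp) h2
  have hG1 : HasFDerivAt (fun q : ℝ × ℝ => π * q.2 * Real.tan (π * q.1))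
      ((π * p.2) • ((1 / Real.cos (π * p.1) ^ 2) • (π • Pfst)) +
        Real.tan (π * p.1) • (π • Psnd)) p :=
    ((hasFDerivAt_snd).const_mul π).mul (hTan p hc)
  have hG2 : HasFDerivAt (fun q : ℝ × ℝ =>
      Real.log (π * q.2) - Real.log (Real.cos (π * q.1)))
      (((π * p.2)⁻¹ • (π • Psnd)) -
        ((Real.cos (π * p.1))⁻¹ • ((-Real.sin (π * p.1)) • (π • Pfst)))) p :=
    (hLpit p ht).sub (hLcos p hc)
  have e11 : pd1 (pd1 σ) p = π ^ 2 * p.2 * (1 / Real.cos (π * p.1) ^ 2) := by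
    rw [show pd1 (pd1 σ) p = fderiv ℝ (pd1 σ) p (1, 0) from rfl,
      heq1.fderiv_eq, hG1.fderiv]
    simp [Pfst, Psnd]
    ring
  have e12 : pd2 (pd1 σ) p = π * Real.tan (π * p.1) := by
    rw [show pd2 (pd1 σ) p = fderiv ℝ (pd1 σ) p (0, 1) from rfl,
      heq1.fderiv_eq, hG1.fderiv]
    simp [Pfst, Psnd]
    ring
  have e22 : pd2 (pd2 σ) p = 1 / p.2 := by
    rw [show pd2 (pd2 σ) p = fderiv ℝ (pd2 σ) p (0, 1) from rfl,
      heq2.fderiv_eq, hG2.fderiv]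
    simp [Pfst, Psnd]
  refine ⟨e11, e12, e22, ?_⟩
  rw [e11, e12, e22, Real.tan_eq_sin_div_cos]
  have hsc := Real.sin_sq_add_cos_sq (π * p.1)
  field_simp
  linear_combination (-1 : ℝ) * hsc
end

section
/- Let a, b be real numbers with a² + b² + a + b = 0 and a ≠ −1. Define x(u, v) = e^{au + bv} and y(u, v) = −(b/(a+1)) e^{(a+1)u + (b+1)v} on ℝ². Then: (1) x satisfies Δx + x_u + x_v = 0 on ℝ²; and (2) ∇y = ∗ e^{u+v} ∇x on ℝ², i.e. y_u = −e^{u+v} x_v and y_v = e^{u+v} x_u; thus x is e^{u+v}-harmonic with conjugate function y. -/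
lemma hasFDerivAt_cexp (c a b : ℝ) (p : ℝ × ℝ) :
    HasFDerivAt (fun p : ℝ × ℝ => c * Real.exp (a * p.1 + b * p.2))
      (c • Real.exp (a * p.1 + b * p.2) •
        (a • ContinuousLinearMap.fst ℝ ℝ ℝ + b • ContinuousLinearMap.snd ℝ ℝ ℝ)) p := by
  have hg : HasFDerivAt (fun p : ℝ × ℝ => a * p.1 + b * p.2)
      (a • ContinuousLinearMap.fst ℝ ℝ ℝ + b • ContinuousLinearMap.snd ℝ ℝ ℝ) p :=
    ((hasFDerivAt_fst.const_mul a).add (hasFDerivAt_snd.const_mul b))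
  have h := ((Real.hasDerivAt_exp (a * p.1 + b * p.2)).comp_hasFDerivAt p hg).const_mul c
  exact h

lemma pd1_cexp (c a b : ℝ) (p : ℝ × ℝ) :
    pd1 (fun p : ℝ × ℝ => c * Real.exp (a * p.1 + b * p.2)) p
      = c * a * Real.exp (a * p.1 + b * p.2) := by
  have := (hasFDerivAt_cexp c a b p).fderiv
  simp only [pd1, this]
  simp [mul_comm, mul_assoc, mul_left_comm]

lemma pd2_cexp (c a b : ℝ) (p : ℝ × ℝ) :
    pd2 (fun p : ℝ × ℝ => c * Real.exp (a * p.1 + b * p.2)) p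
      = c * b * Real.exp (a * p.1 + b * p.2) := by
  have := (hasFDerivAt_cexp c a b p).fderiv
  simp only [pd2, this]
  simp [mul_comm, mul_assoc, mul_left_comm]

theorem stmt14 (a b : ℝ) (hab : a ^ 2 + b ^ 2 + a + b = 0) (ha : a ≠ -1)
    (x y : ℝ × ℝ → ℝ)
    (hx : x = fun p => Real.exp (a * p.1 + b * p.2))
    (hy : y = fun p => -(b / (a + 1)) * Real.exp ((a + 1) * p.1 + (b + 1) * p.2)) :
    (∀ p : ℝ × ℝ,
      pd1 (pd1 x) p + pd2 (pd2 x) p + pd1 x p + pd2 x p = 0) ∧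
    (∀ p : ℝ × ℝ,
      pd1 y p = -Real.exp (p.1 + p.2) * pd2 x p ∧
      pd2 y p = Real.exp (p.1 + p.2) * pd1 x p) := by
  have ha1 : a + 1 ≠ 0 := fun h => ha (by linarith)
  have hx' : x = fun p : ℝ × ℝ => 1 * Real.exp (a * p.1 + b * p.2) := by
    simp [hx]
  have hpd1x : pd1 x = fun p : ℝ × ℝ => a * Real.exp (a * p.1 + b * p.2) := by
    funext p
    rw [hx', pd1_cexp]; ring
  have hpd2x : pd2 x = fun p : ℝ × ℝ => b * Real.exp (a * p.1 + b * p.2) := by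
    funext p
    rw [hx', pd2_cexp]; ring
  constructor
  · intro p
    rw [hpd1x, hpd2x, pd1_cexp, pd2_cexp]
    simp only []
    have : a * a + b * b + a + b = 0 := by nlinarith [hab]
    nlinarith [this, Real.exp_pos (a * p.1 + b * p.2)]
  · intro p
    have hexp : Real.exp ((a + 1) * p.1 + (b + 1) * p.2)
        = Real.exp (p.1 + p.2) * Real.exp (a * p.1 + b * p.2) := by
      rw [← Real.exp_add]; ring_nf
    constructor
    · rw [hy, pd1_cexp, hpd2x, hexp]
      field_simp
    · rw [hy, pd2_cexp, hpd1x, hexp]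
      have hb : -(b / (a + 1)) * (b + 1) = a := by
        field_simp
        nlinarith [hab]
      calc -(b / (a + 1)) * (b + 1) * (Real.exp (p.1 + p.2) * Real.exp (a * p.1 + b * p.2))
          = a * (Real.exp (p.1 + p.2) * Real.exp (a * p.1 + b * p.2)) := by rw [hb]
        _ = _ := by ring
end

section
/- Let x, y be real numbers with x² + y² < 1/2, and define z = (y − x + i√(1 − 2(x² + y²)))/(1 + x + y) ∈ ℂ. Then 1 + x + y > 0, Im z > 0, and the map inverts the Aztec diamond envelope parameterization: x = (1 − 2 Re z − |z|²)/(2(1 + |z|²)) and y = (1 + 2 Re z − |z|²)/(2(1 + |z|²)). -/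
theorem stmt19 (x y : ℝ) (hxy : x ^ 2 + y ^ 2 < 1 / 2) (z : ℂ)
    (hz : z = (((y - x : ℝ) : ℂ) +
        Complex.I * (Real.sqrt (1 - 2 * (x ^ 2 + y ^ 2)) : ℝ)) /
      ((1 + x + y : ℝ) : ℂ)) :
    0 < 1 + x + y ∧ 0 < z.im ∧
    x = (1 - 2 * z.re - ‖z‖ ^ 2) / (2 * (1 + ‖z‖ ^ 2)) ∧
    y = (1 + 2 * z.re - ‖z‖ ^ 2) / (2 * (1 + ‖z‖ ^ 2)) := by
  set s := Real.sqrt (1 - 2 * (x ^ 2 + y ^ 2)) with hs_def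
  have hs2 : s ^ 2 = 1 - 2 * (x ^ 2 + y ^ 2) := Real.sq_sqrt (by linarith)
  have hs0 : 0 < s := Real.sqrt_pos.mpr (by linarith)
  have hd : 0 < 1 + x + y := by nlinarith [sq_nonneg (x - y), sq_nonneg (x + y + 1)]
  have hdne : (1 + x + y) ≠ 0 := ne_of_gt hd
  have hre : z.re = (y - x) / (1 + x + y) := by
    rw [hz]
    simp [Complex.div_re, Complex.normSq_apply]
    field_simp
  have him : z.im = s / (1 + x + y) := by
    rw [hz]
    simp [Complex.div_im, Complex.normSq_apply]
    field_simp
  have habs : ‖z‖ ^ 2 = 2 / (1 + x + y) - 1 := by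
    rw [Complex.sq_norm, Complex.normSq_apply, hre, him]
    field_simp
    nlinarith [hs2]
  refine ⟨hd, by rw [him]; positivity, ?_, ?_⟩
  · rw [hre, habs]
    rw [show (1 : ℝ) + (2 / (1 + x + y) - 1) = 2 / (1 + x + y) by ring]
    field_simp
    ring
  · rw [hre, habs]
    rw [show (1 : ℝ) + (2 / (1 + x + y) - 1) = 2 / (1 + x + y) by ring]
    field_simp
    ring
end
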